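/- arXiv:1007.0077 — 4 statements merged into one kernel-verified Lean document; each statement's English description precedes it below -/
import Mathlib

section
/- Let α ∈ (0,1]. For all nonzero complex numbers z₁ and z₂, Re( (z₁/|z₁|^α − z₂/|z₂|^α) · conj(z₁ − z₂) ) ≥ 0. -/
/-!
Writing `a = ‖x‖⁻ᵅ`, `b = ‖y‖⁻ᵅ` and using Cauchy–Schwarz,
`⟪x - y, a • x - b • y⟫ ≥ (‖x‖ - ‖y‖) * (a * ‖x‖ - b * ‖y‖)`, and the right-hand side is
nonnegative because `s ↦ s / s ^ α = s ^ (1 - α)` is monotone on `[0, ∞)` when `α ≤ 1`.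
In `ℂ`, `Re (w * conj v)` is the real inner product `⟪v, w⟫`.
-/

open Real RealInnerProductSpace

lemma monotoneOn_div_rpow_self {α : ℝ} (hα : α ≤ 1) :
    MonotoneOn (fun s : ℝ => s / s ^ α) (Set.Ici 0) := by
  intro s hs t ht hst
  rcases (Set.mem_Ici.mp hs).eq_or_lt with rfl | hs_pos
  · simpa using div_nonneg ht (rpow_nonneg ht α)
  have h_rpow {r : ℝ} (hr : 0 < r) : r / r ^ α = r ^ (1 - α) := by rw [rpow_sub hr, rpow_one]
  simp only [h_rpow hs_pos, h_rpow (hs_pos.trans_le hst)]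
  exact rpow_le_rpow hs_pos.le hst (sub_nonneg.mpr hα)

lemma mul_sub_div_rpow_self_nonneg {α s t : ℝ} (hα : α ≤ 1) (hs : 0 ≤ s) (ht : 0 ≤ t) :
    0 ≤ (s - t) * (s / s ^ α - t / t ^ α) := by
  rcases le_total s t with hst | hts
  · exact mul_nonneg_of_nonpos_of_nonpos (sub_nonpos.mpr hst)
      (sub_nonpos.mpr (monotoneOn_div_rpow_self hα hs ht hst))
  · exact mul_nonneg (sub_nonneg.mpr hts)
      (sub_nonneg.mpr (monotoneOn_div_rpow_self hα ht hs hts))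

section InnerProductSpace

variable {E : Type*} [NormedAddCommGroup E] [InnerProductSpace ℝ E]

lemma mul_sub_mul_norm_le_real_inner_sub_smul_sub_smul {a b : ℝ} (ha : 0 ≤ a) (hb : 0 ≤ b)
    (x y : E) : (‖x‖ - ‖y‖) * (a * ‖x‖ - b * ‖y‖) ≤ ⟪x - y, a • x - b • y⟫ := by
  have hxy := real_inner_le_norm x y
  simp only [inner_sub_left, inner_sub_right, real_inner_smul_right, real_inner_self_eq_norm_sq,
    real_inner_comm x y]
  nlinarith [mul_nonneg (add_nonneg ha hb) (sub_nonneg.mpr hxy)]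

lemma real_inner_sub_inv_rpow_norm_smul_sub_nonneg {α : ℝ} (hα : α ≤ 1) (x y : E) :
    0 ≤ ⟪x - y, (‖x‖ ^ α)⁻¹ • x - (‖y‖ ^ α)⁻¹ • y⟫ := by
  refine le_trans ?_ (mul_sub_mul_norm_le_real_inner_sub_smul_sub_smul
    (inv_nonneg.mpr (rpow_nonneg (norm_nonneg x) α))
    (inv_nonneg.mpr (rpow_nonneg (norm_nonneg y) α)) x y)
  simpa only [inv_mul_eq_div] using mul_sub_div_rpow_self_nonneg hα (norm_nonneg x) (norm_nonneg y)

end InnerProductSpace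

theorem stmt_0_general (α : ℝ) (hα1 : α ≤ 1) (z₁ z₂ : ℂ) :
    0 ≤ ((z₁ / ((‖z₁‖ ^ α : ℝ) : ℂ) - z₂ / ((‖z₂‖ ^ α : ℝ) : ℂ)) *
      (starRingEnd ℂ) (z₁ - z₂)).re := by
  simpa only [Complex.inner, Complex.real_smul, div_eq_inv_mul, Complex.ofReal_inv]
    using real_inner_sub_inv_rpow_norm_smul_sub_nonneg hα1 z₁ z₂

/-- Let α ∈ (0,1]. For all nonzero complex numbers z₁ and z₂,
Re( (z₁/|z₁|^α − z₂/|z₂|^α) · conj(z₁ − z₂) ) ≥ 0. -/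
theorem stmt_0 (α : ℝ) (hα : 0 < α) (hα1 : α ≤ 1) (z₁ z₂ : ℂ) (hz₁ : z₁ ≠ 0) (hz₂ : z₂ ≠ 0) :
    0 ≤ ((z₁ / ((‖z₁‖ ^ α : ℝ) : ℂ) - z₂ / ((‖z₂‖ ^ α : ℝ) : ℂ)) *
      (starRingEnd ℂ) (z₁ - z₂)).re :=
  stmt_0_general α hα1 z₁ z₂
end

section
/- Let α ∈ (0,1], γ > 0, and y₀ ≥ 0, and set t_c = y₀^{α/2}/(αγ). Let y : [0,∞) → [0,∞) be differentiable with y(0) = y₀ and y'(t) = −2γ · y(t)^{1−α/2} for all t ≥ 0. Then y(t) = ( y₀^{α/2} − αγ t )^{2/α} for all t ∈ [0, t_c], and y(t) = 0 for all t ≥ t_c. -/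
open Topology Filter


/-- Let α ∈ (0,1], γ > 0, y₀ ≥ 0, and t_c = y₀^{α/2}/(αγ). If
y : [0,∞) → [0,∞) is differentiable with y(0) = y₀ and y'(t) = −2γ y(t)^{1−α/2} for t ≥ 0,
then y(t) = (y₀^{α/2} − αγt)^{2/α} on [0, t_c] and y(t) = 0 for t ≥ t_c. -/
theorem stmt_9 (α γ y₀ : ℝ) (hα : 0 < α) (hα1 : α ≤ 1) (hγ : 0 < γ) (hy₀ : 0 ≤ y₀)
    (y : ℝ → ℝ) (hy0 : y 0 = y₀) (hynn : ∀ t, 0 ≤ t → 0 ≤ y t)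
    (hy' : ∀ t, 0 ≤ t →
      HasDerivWithinAt y (-(2 * γ) * y t ^ (1 - α / 2)) (Set.Ici (0 : ℝ)) t) :
    (∀ t, 0 ≤ t → t ≤ y₀ ^ (α / 2) / (α * γ) →
        y t = (y₀ ^ (α / 2) - α * γ * t) ^ (2 / α)) ∧
    (∀ t, y₀ ^ (α / 2) / (α * γ) ≤ t → y t = 0) := by
  have hαγ : 0 < α * γ := mul_pos hα hγ
  have hα2 : 0 < α / 2 := by linarith
  have hcont : ContinuousOn y (Set.Ici 0) := fun t ht => (hy' t ht).continuousWithinAt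
  -- y is antitone on [0, ∞)
  have hanti : AntitoneOn y (Set.Ici 0) := by
    apply antitoneOn_of_hasDerivWithinAt_nonpos (convex_Ici 0) hcont
      (f' := fun t => -(2 * γ) * y t ^ (1 - α / 2))
    · intro x hx
      rw [interior_Ici] at hx ⊢
      exact (hy' x (le_of_lt hx)).mono Set.Ioi_subset_Ici_self
    · intro x hx
      rw [interior_Ici] at hx
      have : 0 ≤ y x ^ (1 - α / 2) := Real.rpow_nonneg (hynn x hx.le) _
      nlinarith
  -- continuity of g = y^{α/2} + αγ·t
  set g : ℝ → ℝ := fun s => y s ^ (α / 2) + α * γ * s with hg_def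
  have hgcont : ContinuousOn g (Set.Ici 0) :=
    (hcont.rpow_const fun x _ => Or.inr hα2.le).add
      ((continuous_const.mul continuous_id).continuousOn)
  -- key lemma: while y > 0, y^{α/2} + αγ t = y₀^{α/2}
  have star : ∀ t, 0 ≤ t → 0 < y t → g t = y₀ ^ (α / 2) := by
    intro t ht hpos
    have hsub : Set.Icc (0:ℝ) t ⊆ Set.Ici 0 := Set.Icc_subset_Ici_self
    have hgc : ContinuousOn g (Set.Icc 0 t) := hgcont.mono hsub
    have hderiv : ∀ x ∈ interior (Set.Icc (0:ℝ) t),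
        HasDerivWithinAt g 0 (interior (Set.Icc (0:ℝ) t)) x := by
      intro x hx
      rw [interior_Icc] at hx ⊢
      have hx0 : 0 < x := hx.1
      have hyx : 0 < y x := lt_of_lt_of_le hpos (hanti (Set.mem_Ici.2 hx0.le) (Set.mem_Ici.2 ht) hx.2.le)
      have hdy : HasDerivAt y (-(2 * γ) * y x ^ (1 - α / 2)) x :=
        (hy' x hx0.le).hasDerivAt (Ici_mem_nhds hx0)
      have h1 : HasDerivAt (fun s => y s ^ (α / 2))
          (-(2 * γ) * y x ^ (1 - α / 2) * (α / 2) * y x ^ (α / 2 - 1)) x :=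
        hdy.rpow_const (Or.inl hyx.ne')
      have hmul : y x ^ (1 - α / 2) * y x ^ (α / 2 - 1) = 1 := by
        rw [← Real.rpow_add hyx]; norm_num
      have hval : -(2 * γ) * y x ^ (1 - α / 2) * (α / 2) * y x ^ (α / 2 - 1) = -(α * γ) := by
        linear_combination (-(α * γ)) * hmul
      rw [hval] at h1
      have h2 : HasDerivAt (fun s : ℝ => α * γ * s) (α * γ) x := by
        simpa using (hasDerivAt_id x).const_mul (α * γ)
      have h3 := h1.add h2
      simp only [neg_add_cancel] at h3
      exact h3.hasDerivWithinAt
    have hmono : MonotoneOn g (Set.Icc 0 t) :=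
      monotoneOn_of_hasDerivWithinAt_nonneg (convex_Icc 0 t) hgc hderiv (fun _ _ => le_refl 0)
    have hant : AntitoneOn g (Set.Icc 0 t) :=
      antitoneOn_of_hasDerivWithinAt_nonpos (convex_Icc 0 t) hgc hderiv (fun _ _ => le_refl 0)
    have h0m : (0:ℝ) ∈ Set.Icc (0:ℝ) t := Set.left_mem_Icc.2 ht
    have htm : t ∈ Set.Icc (0:ℝ) t := Set.right_mem_Icc.2 ht
    have heq : g t = g 0 :=
      le_antisymm (hant h0m htm ht) (hmono h0m htm ht)
    rw [heq]
    simp [hg_def, hy0]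
  have hαγne : α * γ ≠ 0 := hαγ.ne'
  have htc_nonneg : 0 ≤ y₀ ^ (α / 2) / (α * γ) :=
    div_nonneg (Real.rpow_nonneg hy₀ _) hαγ.le
  have htc_mul : α * γ * (y₀ ^ (α / 2) / (α * γ)) = y₀ ^ (α / 2) := by
    field_simp
  -- part 2 as a standalone fact
  have part2 : ∀ t, y₀ ^ (α / 2) / (α * γ) ≤ t → y t = 0 := by
    intro t ht
    have ht0 : 0 ≤ t := le_trans htc_nonneg ht
    by_contra hne
    have hpos : 0 < y t := lt_of_le_of_ne (hynn t ht0) (Ne.symm hne)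
    have := star t ht0 hpos
    have hle : α * γ * (y₀ ^ (α / 2) / (α * γ)) ≤ α * γ * t :=
      mul_le_mul_of_nonneg_left ht hαγ.le
    rw [htc_mul] at hle
    have hrp : 0 < y t ^ (α / 2) := Real.rpow_pos_of_pos hpos _
    simp only [hg_def] at this
    linarith
  refine ⟨?_, part2⟩
  intro t ht htc
  rcases eq_or_lt_of_le (hynn t ht) with hzero | hpos
  · -- y t = 0 : show t = t_c, i.e. y₀^{α/2} = αγt
    have hR : y₀ ^ (α / 2) - α * γ * t = 0 := by
      by_contra hRne
      have hlt : α * γ * t < y₀ ^ (α / 2) := by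
        have hle : α * γ * t ≤ α * γ * (y₀ ^ (α / 2) / (α * γ)) :=
          mul_le_mul_of_nonneg_left htc hαγ.le
        rw [htc_mul] at hle
        exact lt_of_le_of_ne hle (fun h => hRne (by linarith))
      -- infimum of zero set
      set Z : Set ℝ := Set.Icc (0:ℝ) t ∩ y ⁻¹' {0} with hZ_def
      have htZ : t ∈ Z := ⟨Set.right_mem_Icc.2 ht, hzero.symm⟩
      have hZne : Z.Nonempty := ⟨t, htZ⟩
      have hZbdd : BddBelow Z := ⟨0, fun s hs => hs.1.1⟩
      have hZclosed : IsClosed Z :=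
        (hcont.mono Set.Icc_subset_Ici_self).preimage_isClosed_of_isClosed
          isClosed_Icc isClosed_singleton
      set u := sInf Z with hu_def
      have huZ : u ∈ Z := hZclosed.csInf_mem hZne hZbdd
      have hu0 : 0 ≤ u := huZ.1.1
      have hut : u ≤ t := huZ.1.2
      have hyu : y u = 0 := huZ.2
      have hupos : 0 < u := by
        rcases eq_or_lt_of_le hu0 with h | h
        · exfalso
          have h0u : y 0 = y u := congrArg y h
          have hy00 : y₀ = 0 := by rw [← hy0, h0u, hyu]
          rw [hy00, Real.zero_rpow hα2.ne'] at hlt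
          nlinarith [hynn t ht]
        · exact h
      -- y > 0 on [0, u)
      have hposIco : ∀ s ∈ Set.Ico (0:ℝ) u, 0 < y s := by
        intro s hs
        rcases eq_or_lt_of_le (hynn s hs.1) with h | h
        · exfalso
          have : s ∈ Z := ⟨⟨hs.1, le_trans hs.2.le hut⟩, h.symm⟩
          exact absurd (csInf_le hZbdd this) (not_le.2 hs.2)
        · exact h
      -- g is constant = y₀^{α/2} on [0, u)
      have hgconst : ∀ s ∈ Set.Ico (0:ℝ) u, g s = y₀ ^ (α / 2) := fun s hs =>
        star s hs.1 (hposIco s hs)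
      -- limit argument at u
      haveI hne : (𝓝[Set.Ico (0:ℝ) u] u).NeBot := by
        apply mem_closure_iff_nhdsWithin_neBot.1
        rw [closure_Ico hupos.ne]
        exact Set.right_mem_Icc.2 hu0
      have htend1 : Filter.Tendsto g (𝓝[Set.Ico (0:ℝ) u] u) (𝓝 (g u)) :=
        ((hgcont u (Set.mem_Ici.2 hu0)).mono
          (Set.Ico_subset_Icc_self.trans Set.Icc_subset_Ici_self)).tendsto
      have htend2 : Filter.Tendsto g (𝓝[Set.Ico (0:ℝ) u] u) (𝓝 (y₀ ^ (α / 2))) := by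
        apply Filter.Tendsto.congr' _ tendsto_const_nhds
        filter_upwards [eventually_mem_nhdsWithin] with s hs
        exact (hgconst s hs).symm
      have hgu : g u = y₀ ^ (α / 2) := tendsto_nhds_unique htend1 htend2
      simp only [hg_def, hyu, Real.zero_rpow hα2.ne', zero_add] at hgu
      -- so αγu = y₀^{α/2}, hence u = t_c, but u ≤ t < t_c
      have : α * γ * u < y₀ ^ (α / 2) := lt_of_le_of_lt
        (mul_le_mul_of_nonneg_left hut hαγ.le) hlt
      linarith
    rw [← hzero, hR, Real.zero_rpow]
    positivity
  · -- y t > 0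
    have hst := star t ht hpos
    simp only [hg_def] at hst
    have h1 : y t ^ (α / 2) = y₀ ^ (α / 2) - α * γ * t := by linarith
    have hexp : α / 2 * (2 / α) = 1 := by field_simp
    have : (y t ^ (α / 2)) ^ (2 / α) = y t := by
      rw [← Real.rpow_mul (hynn t ht), hexp, Real.rpow_one]
    rw [← this, h1]
end

section
/- Let α ∈ (0,1] and γ > 0. Let u : [0,∞) → ℂ be differentiable and satisfy u'(t) = −γ · u(t)/|u(t)|^α whenever u(t) ≠ 0, and u'(t) = 0 whenever u(t) = 0. Then u(t) = 0 for every t ≥ |u(0)|^α/(αγ). -/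
/-!
Wherever `u ≠ 0` the flow gives `d/dt ‖u‖^α = -αγ`, so `‖u t‖^α + αγ t` is constant on every
interval on which `u` does not vanish, and by continuity this persists to the endpoints. If
`u t ≠ 0`, let `m` be the last zero of `u` in `[0, t]` (or `m = 0` if there is none); conservation
on `[m, t]` then forces `‖u t‖^α ≤ αγ (m - t) ≤ 0` or `‖u t‖^α ≤ ‖u 0‖^α - αγ t ≤ 0`.
-/

open Set

section RadialFlow

variable {E : Type*} [NormedAddCommGroup E] [InnerProductSpace ℝ E] {u : ℝ → E}

theorem HasDerivAt.norm_rpow_of_eq_smul {α k x : ℝ} (hu : HasDerivAt u (k • u x) x)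
    (hx : u x ≠ 0) : HasDerivAt (fun t ↦ ‖u t‖ ^ α) (α * k * ‖u x‖ ^ α) x := by
  have hpos : 0 < ‖u x‖ := norm_pos_iff.mpr hx
  have hsq : HasDerivAt (fun t ↦ ‖u t‖ ^ 2) (2 * k * ‖u x‖ ^ 2) x := by
    convert hu.norm_sq using 1
    rw [inner_smul_right, real_inner_self_eq_norm_sq]; ring
  have hrpow := hsq.rpow_const (p := α / 2) (Or.inl (by positivity))
  have hsqrt : ∀ r : ℝ, 0 ≤ r → (r ^ 2) ^ (α / 2) = r ^ α := fun r hr ↦ by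
    rw [← Real.rpow_natCast, ← Real.rpow_mul hr]; norm_num; ring_nf
  convert hrpow using 1
  · ext t; exact (hsqrt _ (norm_nonneg _)).symm
  · rw [Real.rpow_sub (by positivity), Real.rpow_one, hsqrt _ hpos.le]
    field_simp

theorem norm_rpow_add_mul_eq_of_hasDerivAt {α γ a b : ℝ} (hα : 0 ≤ α) (hab : a ≤ b)
    (hcont : ContinuousOn u (Icc a b))
    (hderiv : ∀ x ∈ Ioo a b, HasDerivAt u (-(γ / ‖u x‖ ^ α) • u x) x)
    (hne : ∀ x ∈ Ioo a b, u x ≠ 0) :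
    ‖u b‖ ^ α + α * γ * b = ‖u a‖ ^ α + α * γ * a := by
  rcases hab.eq_or_lt with rfl | hlt
  · rfl
  set g : ℝ → ℝ := fun t ↦ ‖u t‖ ^ α + α * γ * t
  have hg : ContinuousOn g (Icc a b) :=
    (hcont.norm.rpow_const fun _ _ ↦ Or.inr hα).add (by fun_prop)
  have hg' : ∀ x ∈ Ioo a b, HasDerivAt g 0 x := fun x hx ↦ by
    have hux : ‖u x‖ ^ α ≠ 0 := (Real.rpow_pos_of_pos (norm_pos_iff.mpr (hne x hx)) α).ne'
    refine (((hderiv x hx).norm_rpow_of_eq_smul (hne x hx)).add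
      ((hasDerivAt_id x).const_mul (α * γ))).congr_deriv ?_
    field_simp
    ring
  obtain ⟨c, -, hc⟩ := exists_hasDerivAt_eq_slope g (fun _ ↦ 0) hlt hg hg'
  rw [eq_div_iff (sub_ne_zero.mpr hlt.ne'), zero_mul, eq_comm, sub_eq_zero] at hc
  exact hc

end RadialFlow

theorem ContinuousOn.exists_last_zero_or_left {E : Type*} [NormedAddCommGroup E] {f : ℝ → E}
    {a b : ℝ} (hab : a ≤ b) (hf : ContinuousOn f (Icc a b)) :
    ∃ m ∈ Icc a b, (f m = 0 ∨ m = a) ∧ ∀ x ∈ Ioc m b, f x ≠ 0 := by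
  set Z := Icc a b ∩ f ⁻¹' {0} ∪ {a}
  have hZ : IsClosed Z :=
    (hf.preimage_isClosed_of_isClosed isClosed_Icc isClosed_singleton).union isClosed_singleton
  have hZb : BddAbove Z := ⟨max a b, by rintro x (⟨⟨-, hx⟩, -⟩ | rfl) <;> simp [*]⟩
  have hm := hZ.csSup_mem ⟨a, Or.inr rfl⟩ hZb
  have hma : a ≤ sSup Z := le_csSup hZb (Or.inr rfl)
  refine ⟨sSup Z, ?_, ?_, fun x hx hfx ↦ ?_⟩
  · rcases hm with ⟨hmab, -⟩ | hm
    · exact hmab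
    · exact ⟨hma, (mem_singleton_iff.mp hm).symm ▸ hab⟩
  · rcases hm with ⟨-, hm⟩ | hm
    exacts [Or.inl hm, Or.inr hm]
  · exact hx.1.not_ge (le_csSup hZb (Or.inl ⟨⟨hma.trans hx.1.le, hx.2⟩, hfx⟩))

theorem stmt_10_general (α γ : ℝ) (hα : 0 < α) (hγ : 0 < γ) (u : ℝ → ℂ)
    (hu : ∀ t, 0 ≤ t →
      (u t ≠ 0 → HasDerivWithinAt u
          (-(γ : ℂ) * u t / ((‖u t‖ ^ α : ℝ) : ℂ)) (Set.Ici (0 : ℝ)) t) ∧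
      (u t = 0 → HasDerivWithinAt u 0 (Set.Ici (0 : ℝ)) t)) :
    ∀ t, ‖u 0‖ ^ α / (α * γ) ≤ t → u t = 0 := by
  intro t ht
  by_contra hut
  have hαγ : 0 < α * γ := mul_pos hα hγ
  have ht0 : 0 ≤ t := (div_nonneg (by positivity) hαγ.le).trans ht
  have hcont : ContinuousOn u (Icc 0 t) := fun s hs ↦ by
    by_cases h : u s = 0
    exacts [((hu s hs.1).2 h).continuousWithinAt.mono Icc_subset_Ici_self,
      ((hu s hs.1).1 h).continuousWithinAt.mono Icc_subset_Ici_self]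
  obtain ⟨m, hm, hm_zero, hne⟩ := hcont.exists_last_zero_or_left ht0
  have hderiv : ∀ x ∈ Ioo m t, HasDerivAt u (-(γ / ‖u x‖ ^ α) • u x) x := fun x hx ↦ by
    have hx0 : 0 < x := hm.1.trans_lt hx.1
    refine (((hu x hx0.le).1 (hne x (Ioo_subset_Ioc_self hx))).hasDerivAt
      (Ici_mem_nhds hx0)).congr_deriv ?_
    rw [Complex.real_smul, Complex.ofReal_neg, Complex.ofReal_div]
    ring
  have hcons := norm_rpow_add_mul_eq_of_hasDerivAt hα.le hm.2
    (hcont.mono (Icc_subset_Icc_left hm.1)) hderiv fun x hx ↦ hne x (Ioo_subset_Ioc_self hx)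
  have hstart : ‖u m‖ ^ α + α * γ * m ≤ α * γ * t := by
    rcases hm_zero with h | rfl
    · rw [h, norm_zero, Real.zero_rpow hα.ne', zero_add]
      exact mul_le_mul_of_nonneg_left hm.2 hαγ.le
    · rw [div_le_iff₀' hαγ] at ht
      linarith
  have hpos : 0 < ‖u t‖ ^ α := Real.rpow_pos_of_pos (norm_pos_iff.mpr hut) α
  linarith

/-- Let α ∈ (0,1] and γ > 0. If u : [0,∞) → ℂ is differentiable with
u'(t) = −γ u(t)/|u(t)|^α whenever u(t) ≠ 0 and u'(t) = 0 whenever u(t) = 0, then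
u(t) = 0 for every t ≥ |u(0)|^α/(αγ). -/
theorem stmt_10 (α γ : ℝ) (hα : 0 < α) (hα1 : α ≤ 1) (hγ : 0 < γ) (u : ℝ → ℂ)
    (hu : ∀ t, 0 ≤ t →
      (u t ≠ 0 → HasDerivWithinAt u
          (-(γ : ℂ) * u t / ((‖u t‖ ^ α : ℝ) : ℂ)) (Set.Ici (0 : ℝ)) t) ∧
      (u t = 0 → HasDerivWithinAt u 0 (Set.Ici (0 : ℝ)) t)) :
    ∀ t, ‖u 0‖ ^ α / (α * γ) ≤ t → u t = 0 :=
  stmt_10_general α γ hα hγ u hu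
end

section
/- Let α ∈ (0,1], γ > 0, and δ > 0. Let y : [0,∞) → [0,∞) be differentiable and satisfy y'(t) = −2γ · y(t)/(y(t) + δ)^{α/2} for all t ≥ 0. Then for every t ≥ 0, y(t) ≤ y(0) · exp( −2γ t / (y(0) + δ)^{α/2} ). -/
/-!
Since the right-hand side is nonpositive, `y` decreases, so `(y t + δ) ^ (α / 2)` is at most
`(y 0 + δ) ^ (α / 2)`. Hence `y` satisfies the linear differential inequality
`y' ≤ -K y` with `K = 2γ / (y 0 + δ) ^ (α / 2)`, and Grönwall's inequality gives
`y t ≤ y 0 * exp (-K t)`.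
-/

open Set Real Topology

theorem le_mul_exp_of_hasDerivWithinAt_le_mul {f f' : ℝ → ℝ} {K a : ℝ}
    (hf : ∀ t, a ≤ t → HasDerivWithinAt f (f' t) (Ici a) t)
    (bound : ∀ t, a ≤ t → f' t ≤ K * f t) {t : ℝ} (ht : a ≤ t) :
    f t ≤ f a * exp (K * (t - a)) := by
  have hcont : ContinuousOn f (Icc a t) := fun x hx =>
    (hf x hx.1).continuousWithinAt.mono Icc_subset_Ici_self
  have hslope : ∀ x ∈ Ico a t, ∀ r, f' x < r →
      ∃ᶠ z in 𝓝[>] x, (z - x)⁻¹ * (f z - f x) < r := fun x hx _ hr =>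
    ((hf x hx.1).mono (Ici_subset_Ici.mpr hx.1)).liminf_right_slope_le hr
  have := le_gronwallBound_of_liminf_deriv_right_le (K := K) (ε := 0) hcont hslope le_rfl
    (fun x hx => (bound x hx.1).trans_eq (add_zero _).symm) t ⟨ht, le_rfl⟩
  rwa [gronwallBound_ε0] at this

theorem neg_mul_div_rpow_le_of_le {c δ p u v : ℝ} (hc : 0 ≤ c) (hδ : 0 < δ) (hp : 0 ≤ p)
    (hu : 0 ≤ u) (huv : u ≤ v) :
    -c * u / (u + δ) ^ p ≤ -(c / (v + δ) ^ p) * u := by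
  have hu_pos : 0 < (u + δ) ^ p := rpow_pos_of_pos (by linarith) p
  have hle : (u + δ) ^ p ≤ (v + δ) ^ p := rpow_le_rpow (by linarith) (by linarith) hp
  rw [neg_mul, neg_div, neg_mul, neg_le_neg_iff, div_mul_eq_mul_div]
  exact div_le_div_of_nonneg_left (by positivity) hu_pos hle

theorem stmt_13_general (α γ δ : ℝ) (hα : 0 < α) (hγ : 0 < γ) (hδ : 0 < δ)
    (y : ℝ → ℝ) (hynn : ∀ t, 0 ≤ t → 0 ≤ y t)
    (hy' : ∀ t, 0 ≤ t →
      HasDerivWithinAt y (-(2 * γ) * y t / (y t + δ) ^ (α / 2)) (Set.Ici (0 : ℝ)) t) :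
    ∀ t, 0 ≤ t → y t ≤ y 0 * Real.exp (-(2 * γ) * t / (y 0 + δ) ^ (α / 2)) := by
  intro t ht
  have hc : 0 ≤ 2 * γ := by positivity
  have hp : 0 ≤ α / 2 := by positivity
  have hdecr : ∀ s, 0 ≤ s → y s ≤ y 0 := fun s hs => by
    have hnonpos : ∀ r, 0 ≤ r → -(2 * γ) * y r / (y r + δ) ^ (α / 2) ≤ 0 * y r := fun r hr => by
      rw [zero_mul]
      exact div_nonpos_of_nonpos_of_nonneg
        (mul_nonpos_of_nonpos_of_nonneg (by linarith) (hynn r hr))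
        (rpow_nonneg (by linarith [hynn r hr]) _)
    simpa using le_mul_exp_of_hasDerivWithinAt_le_mul hy' hnonpos hs
  have := le_mul_exp_of_hasDerivWithinAt_le_mul hy' (fun s hs =>
    neg_mul_div_rpow_le_of_le hc hδ hp (hynn s hs) (hdecr s hs)) ht
  convert this using 3
  ring

/-- Let α ∈ (0,1], γ > 0, δ > 0. If y : [0,∞) → [0,∞) is differentiable with
y'(t) = −2γ y(t)/(y(t)+δ)^{α/2} for all t ≥ 0, then for every t ≥ 0,
y(t) ≤ y(0) exp(−2γt/(y(0)+δ)^{α/2}). -/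
theorem stmt_13 (α γ δ : ℝ) (hα : 0 < α) (hα1 : α ≤ 1) (hγ : 0 < γ) (hδ : 0 < δ)
    (y : ℝ → ℝ) (hynn : ∀ t, 0 ≤ t → 0 ≤ y t)
    (hy' : ∀ t, 0 ≤ t →
      HasDerivWithinAt y (-(2 * γ) * y t / (y t + δ) ^ (α / 2)) (Set.Ici (0 : ℝ)) t) :
    ∀ t, 0 ≤ t → y t ≤ y 0 * Real.exp (-(2 * γ) * t / (y 0 + δ) ^ (α / 2)) :=
  stmt_13_general α γ δ hα hγ hδ y hynn hy'
end
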